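/- Singular value thresholding solves the proximal problem: for X ∈ ℝ^{n₁×n₂} with SVD X = U Σ Vᵀ and τ > 0, the unique minimizer of J ↦ (1/2)‖J − X‖_F² + τ‖J‖_* (nuclear norm) is J* = U S_τ(Σ) Vᵀ, where S_τ(Σ) replaces each singular value σ by max(σ − τ, 0). -/

import Mathlib

open Matrix Finset

/-- Singular values of a real matrix: square roots of the eigenvalues of JᵀJ. -/
noncomputable def singularValues {n₁ n₂ : ℕ} (J : Matrix (Fin n₁) (Fin n₂) ℝ) :
    Fin n₂ → ℝ :=
  fun i => Real.sqrt (((by simpa using Matrix.isHermitian_conjTranspose_mul_self J : (Jᵀ * J).IsHermitian)).eigenvalues i)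

/-- Nuclear norm: sum of singular values. -/
noncomputable def nuclearNorm {n₁ n₂ : ℕ} (J : Matrix (Fin n₁) (Fin n₂) ℝ) : ℝ :=
  ∑ j, singularValues J j


/-! The matrix `G = U W Vᵀ`, where `W` is rectangular diagonal with entries
`(σᵢ - max (σᵢ - τ) 0) / τ ∈ [0, 1]`, is a subgradient of the nuclear norm at
`J* = U S_τ(Σ) Vᵀ`. Indeed `1 - GᵀG` is positive semidefinite, so Cauchy–Schwarz applied column
by column in an orthonormal eigenbasis of `JᵀJ` gives `tr (Gᵀ J) ≤ ‖J‖_*` for every `J`, and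
equality holds at `J*` because `W` equals `1` wherever `S_τ(Σ)` is nonzero. Since `X - J* = τ G`,
expanding the square gives `f J ≥ f J* + ½ ‖J - J*‖_F²`, hence both minimality and uniqueness.
The nuclear norm is read off the roots of the characteristic polynomial of `JᵀJ`, which makes it
invariant under `J ↦ U J Vᵀ` and computable on rectangular diagonal matrices. -/

section
variable {n₁ n₂ : ℕ}

theorem nuclearNorm_eq_sum_sqrt_roots (J : Matrix (Fin n₁) (Fin n₂) ℝ) :
    nuclearNorm J = ((Jᵀ * J).charpoly.roots.map Real.sqrt).sum := by
  have hJ : (Jᵀ * J).IsHermitian := by simpa using isHermitian_conjTranspose_mul_self J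
  rw [hJ.roots_charpoly_eq_eigenvalues, Multiset.map_map, ← sum_eq_multiset_sum]
  rfl

open Polynomial in
theorem roots_charpoly_diagonal {R n : Type*} [CommRing R] [IsDomain R] [Fintype n]
    [DecidableEq n] (μ : n → R) : (diagonal μ).charpoly.roots = univ.val.map μ := by
  rw [charpoly_diagonal, roots_prod _ _ (prod_ne_zero_iff.mpr fun i _ => X_sub_C_ne_zero _)]
  simp

theorem transpose_mul_of_orthogonal {R m n : Type*} [CommRing R] [Fintype m] [Fintype n]
    [DecidableEq m] {U : Matrix m m R} (hU : Uᵀ * U = 1) (V : Matrix n n R)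
    (A B : Matrix m n R) : (U * A * Vᵀ)ᵀ * (U * B * Vᵀ) = V * (Aᵀ * B) * Vᵀ := by
  simp only [transpose_mul, transpose_transpose, Matrix.mul_assoc]
  rw [← Matrix.mul_assoc Uᵀ, hU, Matrix.one_mul]

theorem nuclearNorm_orthogonal_mul_mul_transpose {U : Matrix (Fin n₁) (Fin n₁) ℝ}
    {V : Matrix (Fin n₂) (Fin n₂) ℝ} (hU : Uᵀ * U = 1) (hV : Vᵀ * V = 1)
    (A : Matrix (Fin n₁) (Fin n₂) ℝ) : nuclearNorm (U * A * Vᵀ) = nuclearNorm A := by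
  rw [nuclearNorm_eq_sum_sqrt_roots, nuclearNorm_eq_sum_sqrt_roots,
    transpose_mul_of_orthogonal hU, Matrix.mul_assoc, charpoly_mul_comm, Matrix.mul_assoc, hV,
    Matrix.mul_one]

def rectDiagonal {R : Type*} [Zero R] (n₁ n₂ : ℕ) (d : ℕ → R) : Matrix (Fin n₁) (Fin n₂) R :=
  of fun i j => if (i : ℕ) = j then d i else 0

theorem transpose_rectDiagonal_mul_rectDiagonal {R : Type*} [NonUnitalNonAssocSemiring R]
    (d e : ℕ → R) :
    (rectDiagonal n₁ n₂ d)ᵀ * rectDiagonal n₁ n₂ e =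
      diagonal fun j : Fin n₂ => if (j : ℕ) < n₁ then d j * e j else 0 := by
  ext j k
  simp only [Matrix.mul_apply, transpose_apply, rectDiagonal, of_apply, diagonal_apply]
  by_cases hj : (j : ℕ) < n₁
  · rw [sum_eq_single ⟨j, hj⟩ (fun i _ hi => ?_) (by simp)]
    · simp [Fin.ext_iff, hj]
    · rw [if_neg (fun h => hi (Fin.ext h)), zero_mul]
  · rw [if_neg hj, ite_self]
    refine sum_eq_zero fun i _ => ?_
    rw [if_neg (fun h : (i : ℕ) = j => hj (h ▸ i.isLt)), zero_mul]

theorem nuclearNorm_rectDiagonal {d : ℕ → ℝ} (hd : ∀ k, 0 ≤ d k) :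
    nuclearNorm (rectDiagonal n₁ n₂ d) = ∑ j : Fin n₂, if (j : ℕ) < n₁ then d j else 0 := by
  rw [nuclearNorm_eq_sum_sqrt_roots, transpose_rectDiagonal_mul_rectDiagonal,
    roots_charpoly_diagonal, Multiset.map_map, ← sum_eq_multiset_sum]
  refine sum_congr rfl fun j _ => ?_
  rw [Function.comp_apply]
  split_ifs
  · exact Real.sqrt_mul_self (hd j)
  · exact Real.sqrt_zero

theorem Matrix.IsHermitian.transpose_eigenvectorUnitary_mul_mul {n : Type*} [Fintype n]
    [DecidableEq n] {A : Matrix n n ℝ} (hA : A.IsHermitian) :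
    (hA.eigenvectorUnitary : Matrix n n ℝ)ᵀ * A * hA.eigenvectorUnitary =
      diagonal hA.eigenvalues := by
  simpa [← conjTranspose_eq_transpose_of_trivial, star_eq_conjTranspose] using
    hA.conjStarAlgAut_star_eigenvectorUnitary

theorem transpose_mul_self_eq_one_of_unitary {n : Type*} [Fintype n] [DecidableEq n]
    (Q : unitary (Matrix n n ℝ)) : (Q : Matrix n n ℝ)ᵀ * Q = 1 := by
  rw [← conjTranspose_eq_transpose_of_trivial, ← star_eq_conjTranspose, Unitary.coe_star_mul_self]

theorem transpose_mul_self_apply_self {R m n : Type*} [CommSemiring R] [Fintype m]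
    (B : Matrix m n R) (j : n) : (Bᵀ * B) j j = ∑ i, B i j ^ 2 := by
  simp [Matrix.mul_apply, sq]

theorem trace_transpose_mul_eq_sum {R m n : Type*} [CommSemiring R] [Fintype m] [Fintype n]
    (A B : Matrix m n R) : trace (Aᵀ * B) = ∑ j, ∑ i, A i j * B i j := by
  simp [trace, Matrix.mul_apply]

theorem trace_transpose_mul_le_nuclearNorm {W : Matrix (Fin n₁) (Fin n₂) ℝ}
    (hW : (1 - Wᵀ * W).PosSemidef) (M : Matrix (Fin n₁) (Fin n₂) ℝ) :
    trace (Wᵀ * M) ≤ nuclearNorm M := by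
  have hM : (Mᵀ * M).IsHermitian := by simpa using isHermitian_conjTranspose_mul_self M
  set Q : Matrix (Fin n₂) (Fin n₂) ℝ := (hM.eigenvectorUnitary : Matrix (Fin n₂) (Fin n₂) ℝ)
  have hQ : Qᵀ * Q = 1 := transpose_mul_self_eq_one_of_unitary _
  have hMQ (j : Fin n₂) : ∑ i, (M * Q) i j ^ 2 = hM.eigenvalues j := by
    rw [← transpose_mul_self_apply_self, transpose_mul, Matrix.mul_assoc, ← Matrix.mul_assoc Mᵀ,
      ← Matrix.mul_assoc, hM.transpose_eigenvectorUnitary_mul_mul, diagonal_apply_eq]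
  have hWQ (j : Fin n₂) : ∑ i, (W * Q) i j ^ 2 ≤ 1 := by
    have h := (hW.conjTranspose_mul_mul_same Q).diag_nonneg (i := j)
    rwa [conjTranspose_eq_transpose_of_trivial, Matrix.mul_sub, Matrix.sub_mul, Matrix.mul_one, hQ,
      Matrix.sub_apply, one_apply_eq, Matrix.mul_assoc, Matrix.mul_assoc Wᵀ,
      ← Matrix.mul_assoc Qᵀ, ← transpose_mul, transpose_mul_self_apply_self, sub_nonneg] at h
  calc trace (Wᵀ * M) = trace ((W * Q)ᵀ * (M * Q)) := by
        rw [transpose_mul, Matrix.mul_assoc, trace_mul_comm Qᵀ, Matrix.mul_assoc,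
          Matrix.mul_assoc, mul_eq_one_comm.mp hQ, Matrix.mul_one]
    _ = ∑ j, ∑ i, (W * Q) i j * (M * Q) i j := trace_transpose_mul_eq_sum _ _
    _ ≤ ∑ j, √(∑ i, (W * Q) i j ^ 2) * √(∑ i, (M * Q) i j ^ 2) :=
        sum_le_sum fun j _ => Real.sum_mul_le_sqrt_mul_sqrt _ _ _
    _ ≤ ∑ j, √(hM.eigenvalues j) := sum_le_sum fun j _ => by
        rw [hMQ]
        exact mul_le_of_le_one_left (Real.sqrt_nonneg _) (Real.sqrt_le_one.mpr (hWQ j))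
    _ = nuclearNorm M := rfl

theorem posSemidef_one_sub_transpose_rectDiagonal_mul_self {w : ℕ → ℝ} (hw : ∀ k, |w k| ≤ 1) :
    (1 - (rectDiagonal n₁ n₂ w)ᵀ * rectDiagonal n₁ n₂ w).PosSemidef := by
  rw [transpose_rectDiagonal_mul_rectDiagonal, ← diagonal_one, diagonal_sub]
  refine PosSemidef.diagonal fun j => ?_
  dsimp only [Pi.sub_apply, Pi.zero_apply]
  split_ifs
  · nlinarith [abs_le.mp (hw j)]
  · norm_num

end

theorem posSemidef_one_sub_transpose_mul_self_of_orthogonal {m n : Type*} [Fintype m]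
    [Fintype n] [DecidableEq m] [DecidableEq n] {U : Matrix m m ℝ} {V : Matrix n n ℝ}
    (hU : Uᵀ * U = 1) (hV : Vᵀ * V = 1) {W : Matrix m n ℝ} (hW : (1 - Wᵀ * W).PosSemidef) :
    (1 - (U * W * Vᵀ)ᵀ * (U * W * Vᵀ)).PosSemidef := by
  have h := hW.mul_mul_conjTranspose_same V
  rwa [conjTranspose_eq_transpose_of_trivial, Matrix.mul_sub, Matrix.sub_mul, Matrix.mul_one,
    mul_eq_one_comm.mp hV, ← transpose_mul_of_orthogonal hU] at h

section
variable {m n : Type*} [Fintype m] [Fintype n]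

theorem eq_of_sum_sum_sq_sub_nonpos {A B : Matrix m n ℝ}
    (h : ∑ i, ∑ j, (A i j - B i j) ^ 2 ≤ 0) : A = B := by
  have h0 : ∑ i, ∑ j, (A i j - B i j) ^ 2 = 0 := le_antisymm h (by positivity)
  ext i j
  have hi := (Fintype.sum_eq_zero_iff_of_nonneg fun i => by positivity).mp h0
  have hij := (Fintype.sum_eq_zero_iff_of_nonneg fun j => by positivity).mp (congrFun hi i)
  simpa [sub_eq_zero] using congrFun hij j

noncomputable def proxObjective (N : Matrix m n ℝ → ℝ) (τ : ℝ) (X J : Matrix m n ℝ) : ℝ :=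
  1 / 2 * ∑ i, ∑ j, (J i j - X i j) ^ 2 + τ * N J

theorem proxObjective_add_le {N : Matrix m n ℝ → ℝ} {τ : ℝ} (hτ : 0 ≤ τ) {X P G : Matrix m n ℝ}
    (hX : X = P + τ • G) (hG : ∀ J, trace (Gᵀ * J) ≤ N J) (hGP : trace (Gᵀ * P) = N P)
    (J : Matrix m n ℝ) :
    proxObjective N τ X P + 1 / 2 * ∑ i, ∑ j, (J i j - P i j) ^ 2 ≤ proxObjective N τ X J := by
  have hsq (i : m) (j : n) : (J i j - X i j) ^ 2 =
      (J i j - P i j) ^ 2 + (P i j - X i j) ^ 2 - 2 * τ * (G i j * J i j - G i j * P i j) := by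
    rw [hX, Matrix.add_apply, Matrix.smul_apply, smul_eq_mul]
    ring
  have hexpand : ∑ i, ∑ j, (J i j - X i j) ^ 2 = ∑ i, ∑ j, (J i j - P i j) ^ 2 +
      ∑ i, ∑ j, (P i j - X i j) ^ 2 - 2 * τ * (trace (Gᵀ * J) - trace (Gᵀ * P)) := by
    simp only [hsq, sum_add_distrib, sum_sub_distrib, ← mul_sum, trace_transpose_mul_eq_sum,
      sum_comm (γ := n)]
  have hτG : τ * trace (Gᵀ * J) ≤ τ * N J := mul_le_mul_of_nonneg_left (hG J) hτ
  unfold proxObjective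
  rw [hexpand, ← hGP]
  linarith

theorem proxObjective_unique_min_of_subgradient {N : Matrix m n ℝ → ℝ} {τ : ℝ} (hτ : 0 ≤ τ)
    {X P G : Matrix m n ℝ} (hX : X = P + τ • G) (hG : ∀ J, trace (Gᵀ * J) ≤ N J)
    (hGP : trace (Gᵀ * P) = N P) :
    (∀ J, proxObjective N τ X P ≤ proxObjective N τ X J) ∧
      ∀ J, proxObjective N τ X J = proxObjective N τ X P → J = P := by
  have key := proxObjective_add_le hτ hX hG hGP
  refine ⟨fun J => le_trans (le_add_of_nonneg_right (by positivity)) (key J),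
    fun J hJ => eq_of_sum_sum_sq_sub_nonpos ?_⟩
  linarith [key J]

end

theorem svt_prox_nuclear_general
    (n₁ n₂ : ℕ) (X : Matrix (Fin n₁) (Fin n₂) ℝ) (τ : ℝ) (hτ : 0 < τ)
    (U : Matrix (Fin n₁) (Fin n₁) ℝ) (hU : Uᵀ * U = 1)
    (V : Matrix (Fin n₂) (Fin n₂) ℝ) (hV : Vᵀ * V = 1)
    (σ : ℕ → ℝ) (hσ : ∀ i, 0 ≤ σ i)
    (hX : X = U * (Matrix.of fun (i : Fin n₁) (j : Fin n₂) =>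
      if (i : ℕ) = (j : ℕ) then σ (i : ℕ) else 0) * Vᵀ) :
    let f : Matrix (Fin n₁) (Fin n₂) ℝ → ℝ := fun J =>
      (1 / 2) * (∑ i, ∑ j, (J i j - X i j) ^ 2) + τ * nuclearNorm J
    let Jstar : Matrix (Fin n₁) (Fin n₂) ℝ :=
      U * (Matrix.of fun (i : Fin n₁) (j : Fin n₂) =>
        if (i : ℕ) = (j : ℕ) then max (σ (i : ℕ) - τ) 0 else 0) * Vᵀ
    (∀ J, f Jstar ≤ f J) ∧ (∀ J, f J = f Jstar → J = Jstar) := by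
  set d : ℕ → ℝ := fun k => max (σ k - τ) 0
  set w : ℕ → ℝ := fun k => (σ k - d k) / τ
  have hw (k : ℕ) : |w k| ≤ 1 := by
    have : d k ≤ σ k + τ := max_le (by linarith) (by linarith [hσ k])
    rw [abs_div, abs_of_pos hτ, div_le_one hτ, abs_le]
    constructor <;> linarith [le_max_left (σ k - τ) 0]
  have hwd (k : ℕ) : w k * d k = d k := by
    rcases max_cases (σ k - τ) 0 with ⟨h, -⟩ | ⟨h, -⟩ <;> simp only [w, d, h] <;> field_simp <;> ring
  have hσdw : rectDiagonal n₁ n₂ σ = rectDiagonal n₁ n₂ d + τ • rectDiagonal n₁ n₂ w := by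
    ext i j
    simp only [rectDiagonal, Matrix.add_apply, Matrix.smul_apply, of_apply, smul_eq_mul]
    split_ifs
    · simp only [w]; field_simp; ring
    · simp
  set G := U * rectDiagonal n₁ n₂ w * Vᵀ
  set P := U * rectDiagonal n₁ n₂ d * Vᵀ
  have hXG : X = P + τ • G := by
    rw [hX]
    change U * rectDiagonal n₁ n₂ σ * Vᵀ = _
    rw [hσdw, Matrix.mul_add, Matrix.add_mul, Matrix.mul_smul, Matrix.smul_mul]
  have hG (J : Matrix (Fin n₁) (Fin n₂) ℝ) : trace (Gᵀ * J) ≤ nuclearNorm J :=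
    trace_transpose_mul_le_nuclearNorm (posSemidef_one_sub_transpose_mul_self_of_orthogonal hU hV
      (posSemidef_one_sub_transpose_rectDiagonal_mul_self hw)) J
  have hGP : trace (Gᵀ * P) = nuclearNorm P := by
    rw [transpose_mul_of_orthogonal hU, trace_mul_cycle, hV, Matrix.one_mul,
      transpose_rectDiagonal_mul_rectDiagonal, trace_diagonal,
      nuclearNorm_orthogonal_mul_mul_transpose hU hV,
      nuclearNorm_rectDiagonal (d := d) fun k => le_max_right _ _]
    simp only [hwd]
  exact proxObjective_unique_min_of_subgradient hτ.le hXG hG hGP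

/-- singular value thresholding: for X with SVD X = U Σ Vᵀ and
τ > 0, the unique minimizer of J ↦ (1/2)‖J − X‖_F² + τ‖J‖_* is
J* = U S_τ(Σ) Vᵀ, where S_τ replaces each singular value σ by max(σ − τ, 0). -/
theorem svt_prox_nuclear
    (n₁ n₂ : ℕ) (X : Matrix (Fin n₁) (Fin n₂) ℝ) (τ : ℝ) (hτ : 0 < τ)
    (U : Matrix (Fin n₁) (Fin n₁) ℝ) (hU : Uᵀ * U = 1) (hU' : U * Uᵀ = 1)
    (V : Matrix (Fin n₂) (Fin n₂) ℝ) (hV : Vᵀ * V = 1) (hV' : V * Vᵀ = 1)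
    (σ : ℕ → ℝ) (hσ : ∀ i, 0 ≤ σ i)
    (hX : X = U * (Matrix.of fun (i : Fin n₁) (j : Fin n₂) =>
      if (i : ℕ) = (j : ℕ) then σ (i : ℕ) else 0) * Vᵀ) :
    let f : Matrix (Fin n₁) (Fin n₂) ℝ → ℝ := fun J =>
      (1 / 2) * (∑ i, ∑ j, (J i j - X i j) ^ 2) + τ * nuclearNorm J
    let Jstar : Matrix (Fin n₁) (Fin n₂) ℝ :=
      U * (Matrix.of fun (i : Fin n₁) (j : Fin n₂) =>
        if (i : ℕ) = (j : ℕ) then max (σ (i : ℕ) - τ) 0 else 0) * Vᵀ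
    (∀ J, f Jstar ≤ f J) ∧ (∀ J, f J = f Jstar → J = Jstar) :=
  svt_prox_nuclear_general n₁ n₂ X τ hτ U hU V hV σ hσ hX
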